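/- Let α : C → D be a morphism of K-coalgebras such that C is quasi-finite as a right D-comodule, so that the corestriction α^* : M^C → M^D has a left adjoint α^! = H_D(C, −). Then for every finite dimensional right D-comodule V, the right C-comodule α^! V is finite dimensional. -/

import Mathlib

open TensorProduct CategoryTheory CategoryTheory.Limits

universe u

set_option maxHeartbeats 1000000
noncomputable section

namespace Formal

variable (K : Type u) [Field K]

structure Comod (C : Type u) [AddCommGroup C] [Module K C] [Coalgebra K C] :
    Type (u + 1) where
  carrier : Type u
  [acg : AddCommGroup carrier]
  [mod : Module K carrier]
  ρ : carrier →ₗ[K] carrier ⊗[K] C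
  counit_comp' :
    (TensorProduct.rid K carrier).toLinearMap ∘ₗ
      LinearMap.lTensor carrier (Coalgebra.counit (R := K) (A := C)) ∘ₗ ρ = LinearMap.id
  coassoc' :
    (TensorProduct.assoc K carrier C C).toLinearMap ∘ₗ LinearMap.rTensor C ρ ∘ₗ ρ =
      LinearMap.lTensor carrier (Coalgebra.comul (R := K) (A := C)) ∘ₗ ρ

attribute [instance] Comod.acg Comod.mod

variable {K}
variable {C D E : Type u}
  [AddCommGroup C] [Module K C] [Coalgebra K C]
  [AddCommGroup D] [Module K D] [Coalgebra K D]
  [AddCommGroup E] [Module K E] [Coalgebra K E]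

@[ext]
structure ComodHom (M N : Comod K C) : Type u where
  f : M.carrier →ₗ[K] N.carrier
  compat : N.ρ ∘ₗ f = LinearMap.rTensor C f ∘ₗ M.ρ

instance : Category (Comod K C) where
  Hom := ComodHom
  id M := ⟨LinearMap.id, by rw [LinearMap.comp_id, LinearMap.rTensor_id, LinearMap.id_comp]⟩
  comp {M N P} g h :=
    ⟨h.f ∘ₗ g.f, by
      rw [← LinearMap.comp_assoc, h.compat, LinearMap.comp_assoc, g.compat,
        ← LinearMap.comp_assoc, ← LinearMap.rTensor_comp]⟩
  id_comp f := by apply ComodHom.ext; exact LinearMap.comp_id _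
  comp_id f := by apply ComodHom.ext; exact LinearMap.id_comp _
  assoc f g h := by apply ComodHom.ext; exact (LinearMap.comp_assoc _ _ _).symm

@[simp] lemma ComodHom.id_f (M : Comod K C) : (𝟙 M : M ⟶ M).f = LinearMap.id := rfl

@[simp] lemma ComodHom.comp_f {M N P : Comod K C} (g : M ⟶ N) (h : N ⟶ P) :
    (g ≫ h).f = h.f ∘ₗ g.f := rfl

section Cores

variable (α : C →ₗc[K] D) (M : Comod K C)

/-- The coaction of the corestricted comodule. -/
def coresρ : M.carrier →ₗ[K] M.carrier ⊗[K] D :=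
  LinearMap.lTensor M.carrier α.toLinearMap ∘ₗ M.ρ

lemma cores_counit :
    (TensorProduct.rid K M.carrier).toLinearMap ∘ₗ
      LinearMap.lTensor M.carrier (Coalgebra.counit (R := K) (A := D)) ∘ₗ coresρ α M =
      LinearMap.id := by
  rw [coresρ, ← LinearMap.comp_assoc M.ρ, ← LinearMap.lTensor_comp, α.counit_comp]
  exact M.counit_comp'

lemma cores_coassoc :
    (TensorProduct.assoc K M.carrier D D).toLinearMap ∘ₗ
      LinearMap.rTensor D (coresρ α M) ∘ₗ coresρ α M =
      LinearMap.lTensor M.carrier (Coalgebra.comul (R := K) (A := D)) ∘ₗ coresρ α M := by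
  set A := α.toLinearMap
  have h1 : LinearMap.rTensor D (coresρ α M) ∘ₗ coresρ α M =
      (TensorProduct.map (LinearMap.lTensor M.carrier A) A ∘ₗ LinearMap.rTensor C M.ρ) ∘ₗ M.ρ := by
    rw [LinearMap.map_comp_rTensor]
    rw [coresρ, ← LinearMap.comp_assoc M.ρ, LinearMap.rTensor_comp_lTensor]
  have h2 : (TensorProduct.assoc K M.carrier D D).toLinearMap ∘ₗ
      TensorProduct.map (LinearMap.lTensor M.carrier A) A =
      LinearMap.lTensor M.carrier (TensorProduct.map A A) ∘ₗ
        (TensorProduct.assoc K M.carrier C C).toLinearMap := by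
    have := TensorProduct.map_map_comp_assoc_eq (R := K)
      (f := (LinearMap.id : M.carrier →ₗ[K] M.carrier)) (g := A) (h := A)
    calc (TensorProduct.assoc K M.carrier D D).toLinearMap ∘ₗ
        TensorProduct.map (LinearMap.lTensor M.carrier A) A
        = (TensorProduct.assoc K M.carrier D D).toLinearMap ∘ₗ
            TensorProduct.map (TensorProduct.map LinearMap.id A) A := rfl
      _ = TensorProduct.map LinearMap.id (TensorProduct.map A A) ∘ₗ
            (TensorProduct.assoc K M.carrier C C).toLinearMap := this.symm
      _ = LinearMap.lTensor M.carrier (TensorProduct.map A A) ∘ₗ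
            (TensorProduct.assoc K M.carrier C C).toLinearMap := rfl
  conv_lhs => rw [h1]
  simp only [← LinearMap.comp_assoc]
  rw [h2]
  simp only [LinearMap.comp_assoc]
  rw [M.coassoc', ← LinearMap.comp_assoc, ← LinearMap.lTensor_comp, α.map_comp_comul,
    LinearMap.lTensor_comp, LinearMap.comp_assoc]
  rfl

/-- Corestriction of scalars along a coalgebra morphism, as a functor. -/
def cores : Comod K C ⥤ Comod K D where
  obj M :=
    { carrier := M.carrier
      ρ := coresρ α M
      counit_comp' := cores_counit α M
      coassoc' := cores_coassoc α M }
  map {M N} f := ⟨f.f, by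
    show coresρ α N ∘ₗ f.f = LinearMap.rTensor D f.f ∘ₗ coresρ α M
    rw [coresρ, coresρ, LinearMap.comp_assoc, f.compat, ← LinearMap.comp_assoc,
      ← LinearMap.comp_assoc, LinearMap.lTensor_comp_rTensor, LinearMap.rTensor_comp_lTensor]⟩
  map_id M := by apply ComodHom.ext; rfl
  map_comp f g := by apply ComodHom.ext; rfl

@[simp] lemma cores_obj_carrier (M : Comod K C) : ((cores α).obj M).carrier = M.carrier := rfl
@[simp] lemma cores_map_f {M N : Comod K C} (f : M ⟶ N) : ((cores α).map f).f = f.f := rfl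

end Cores

/-- The left coaction of `C` as a left `D`-comodule via `α`. -/
def lcoaction (α : C →ₗc[K] D) : C →ₗ[K] D ⊗[K] C :=
  LinearMap.rTensor C α.toLinearMap ∘ₗ Coalgebra.comul

/-- The cotensor product `N □_D C` as a submodule of `N ⊗ C`. -/
def cotensor (α : C →ₗc[K] D) (N : Comod K D) : Submodule K (N.carrier ⊗[K] C) :=
  LinearMap.ker
    ((TensorProduct.assoc K N.carrier D C).toLinearMap ∘ₗ LinearMap.rTensor C N.ρ -
      LinearMap.lTensor N.carrier (lcoaction α))


section Rep

variable {X : Type u} [SmallCategory X]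
variable (K)
variable (Cx : X → Type u) [∀ x, AddCommGroup (Cx x)] [∀ x, Module K (Cx x)]
  [∀ x, Coalgebra K (Cx x)]
variable (F : ∀ {x y : X}, (x ⟶ y) → (Cx x →ₗc[K] Cx y))

/-- A cis-comodule over a coalgebra representation. -/
structure Cis : Type (u + 1) where
  M : ∀ x, Comod K (Cx x)
  str : ∀ {x y : X} (a : x ⟶ y), (cores (F a)).obj (M x) ⟶ M y
  str_id : ∀ x, (str (𝟙 x)).f = LinearMap.id
  str_comp : ∀ {x y z : X} (a : x ⟶ y) (b : y ⟶ z),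
    (str (a ≫ b)).f = (str b).f ∘ₗ (str a).f

/-- A trans-comodule over a coalgebra representation (via the corestriction-side
structure maps `_αM : M_y → α^* M_x` for `α : x ⟶ y`). -/
structure Trans : Type (u + 1) where
  M : ∀ x, Comod K (Cx x)
  str : ∀ {x y : X} (a : x ⟶ y), M y ⟶ (cores (F a)).obj (M x)
  str_id : ∀ x, (str (𝟙 x)).f = LinearMap.id
  str_comp : ∀ {x y z : X} (a : x ⟶ y) (b : y ⟶ z),
    (str (a ≫ b)).f = (str a).f ∘ₗ (str b).f

variable {K Cx F}

@[ext]
structure CisHom (P Q : Cis K Cx (F := @F)) : Type u where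
  η : ∀ x, P.M x ⟶ Q.M x
  nat : ∀ {x y : X} (a : x ⟶ y), (η y).f ∘ₗ (P.str a).f = (Q.str a).f ∘ₗ (η x).f

@[ext]
structure TransHom (P Q : Trans K Cx (F := @F)) : Type u where
  η : ∀ x, P.M x ⟶ Q.M x
  nat : ∀ {x y : X} (a : x ⟶ y), (η x).f ∘ₗ (P.str a).f = (Q.str a).f ∘ₗ (η y).f

instance : Category (Cis K Cx (F := @F)) where
  Hom := CisHom
  id P := ⟨fun x => 𝟙 (P.M x), fun a => LinearMap.ext fun _ => rfl⟩
  comp g h := ⟨fun x => g.η x ≫ h.η x, fun {x y} a => LinearMap.ext fun v =>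
    ((congrArg (h.η y).f (LinearMap.congr_fun (g.nat a) v)).trans
      (LinearMap.congr_fun (h.nat a) ((g.η x).f v)) :)⟩
  id_comp f := by apply CisHom.ext; funext x; exact Category.id_comp _
  comp_id f := by apply CisHom.ext; funext x; exact Category.comp_id _
  assoc f g h := by apply CisHom.ext; funext x; exact Category.assoc _ _ _

instance : Category (Trans K Cx (F := @F)) where
  Hom := TransHom
  id P := ⟨fun x => 𝟙 (P.M x), fun a => LinearMap.ext fun _ => rfl⟩
  comp g h := ⟨fun x => g.η x ≫ h.η x, fun {x y} a => LinearMap.ext fun v =>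
    ((congrArg (h.η x).f (LinearMap.congr_fun (g.nat a) v)).trans
      (LinearMap.congr_fun (h.nat a) ((g.η y).f v)) :)⟩
  id_comp f := by apply TransHom.ext; funext x; exact Category.id_comp _
  comp_id f := by apply TransHom.ext; funext x; exact Category.comp_id _
  assoc f g h := by apply TransHom.ext; funext x; exact Category.assoc _ _ _

@[simp] lemma CisHom.id_η (P : Cis K Cx (F := @F)) (x : X) :
    (𝟙 P : P ⟶ P).η x = 𝟙 (P.M x) := rfl

@[simp] lemma CisHom.comp_η {P Q R : Cis K Cx (F := @F)} (g : P ⟶ Q) (h : Q ⟶ R) (x : X) :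
    (g ≫ h).η x = g.η x ≫ h.η x := rfl

@[simp] lemma TransHom.id_η (P : Trans K Cx (F := @F)) (x : X) :
    (𝟙 P : P ⟶ P).η x = 𝟙 (P.M x) := rfl

@[simp] lemma TransHom.comp_η {P Q R : Trans K Cx (F := @F)} (g : P ⟶ Q) (h : Q ⟶ R) (x : X) :
    (g ≫ h).η x = g.η x ≫ h.η x := rfl

variable (K Cx F)

/-- Evaluation of cis-comodules at an object. -/
def evCis (x : X) : Cis K Cx (F := @F) ⥤ Comod K (Cx x) where
  obj P := P.M x
  map g := g.η x
  map_id _ := rfl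
  map_comp _ _ := rfl

/-- Evaluation of trans-comodules at an object. -/
def evTrans (x : X) : Trans K Cx (F := @F) ⥤ Comod K (Cx x) where
  obj P := P.M x
  map g := g.η x
  map_id _ := rfl
  map_comp _ _ := rfl

end Rep

end Formal
end

namespace Formal

noncomputable section Aux

open TensorProduct

variable {K : Type u} [Field K] {C : Type u}
  [AddCommGroup C] [Module K C] [Coalgebra K C]

section Coeff

variable {M P : Type u} [AddCommGroup M] [Module K M] [AddCommGroup P] [Module K P]
  {ι : Type u} [DecidableEq ι] (𝒞 : Module.Basis ι K C)

lemma coeff_rTensor (f : M →ₗ[K] P) (t : M ⊗[K] C) (j : ι) :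
    TensorProduct.equivFinsuppOfBasisRight 𝒞 (LinearMap.rTensor C f t) j =
      f (TensorProduct.equivFinsuppOfBasisRight 𝒞 t j) := by
  induction t using TensorProduct.induction_on with
  | zero => simp
  | tmul m c => simp [TensorProduct.equivFinsuppOfBasisRight_apply_tmul_apply]
  | add x y hx hy => simp [hx, hy]

lemma coeff_expand (t : M ⊗[K] C) :
    ((TensorProduct.equivFinsuppOfBasisRight 𝒞 t).sum fun j m => m ⊗ₜ[K] 𝒞 j) = t := by
  conv_rhs => rw [← (TensorProduct.equivFinsuppOfBasisRight 𝒞).symm_apply_apply t]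
  rw [TensorProduct.equivFinsuppOfBasisRight_symm_apply]

end Coeff

/-- Fundamental theorem of comodules: any finite-dimensional subspace of a comodule
is contained in a finite-dimensional subcomodule. -/
lemma exists_findim_subcomodule (M : Comod K C) (W : Submodule K M.carrier)
    (hW : FiniteDimensional K W) :
    ∃ U : Submodule K M.carrier, FiniteDimensional K U ∧ W ≤ U ∧
      ∀ u ∈ U, M.ρ u ∈ LinearMap.range (LinearMap.rTensor C U.subtype) := by
  classical
  obtain ⟨s, hs⟩ : W.FG := (Submodule.fg_iff_finiteDimensional W).mpr hW
  set 𝒞 : Module.Basis (Module.Basis.ofVectorSpaceIndex K C) K C := Module.Basis.ofVectorSpace K C with h𝒞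
  set e : M.carrier ⊗[K] C ≃ₗ[K] (Module.Basis.ofVectorSpaceIndex K C →₀ M.carrier) :=
    TensorProduct.equivFinsuppOfBasisRight 𝒞 with he
  -- the span of the coefficients of `ρ w` is a subcomodule
  have key : ∀ (w : M.carrier) (j : Module.Basis.ofVectorSpaceIndex K C),
      M.ρ (e (M.ρ w) j) ∈ LinearMap.range
        (LinearMap.rTensor C (Submodule.span K (Set.range ⇑(e (M.ρ w)))).subtype) := by
    intro w j
    set N := Submodule.span K (Set.range ⇑(e (M.ρ w))) with hN
    have h1 : LinearMap.rTensor C M.ρ (M.ρ w) =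
        (TensorProduct.assoc K M.carrier C C).symm
          (LinearMap.lTensor M.carrier (Coalgebra.comul (R := K) (A := C)) (M.ρ w)) := by
      apply (TensorProduct.assoc K M.carrier C C).injective
      rw [LinearEquiv.apply_symm_apply]
      exact LinearMap.congr_fun M.coassoc' w
    have h2 : M.ρ (e (M.ρ w) j) =
        TensorProduct.equivFinsuppOfBasisRight 𝒞 (LinearMap.rTensor C M.ρ (M.ρ w)) j :=
      (coeff_rTensor 𝒞 M.ρ (M.ρ w) j).symm
    rw [h2, h1]
    -- expand ρ w as a finite sum of coefficients
    have hmem : ∀ (m : M.carrier), m ∈ N → ∀ (y : C ⊗[K] C),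
        TensorProduct.equivFinsuppOfBasisRight 𝒞
          ((TensorProduct.assoc K M.carrier C C).symm (m ⊗ₜ[K] y)) j ∈
          LinearMap.range (LinearMap.rTensor C N.subtype) := by
      intro m hm y
      induction y using TensorProduct.induction_on with
      | zero => simp
      | tmul c c' =>
          rw [TensorProduct.assoc_symm_tmul,
            TensorProduct.equivFinsuppOfBasisRight_apply_tmul_apply]
          exact Submodule.smul_mem _ _ ⟨(⟨m, hm⟩ : N) ⊗ₜ[K] c, rfl⟩
      | add y₁ y₂ hy₁ hy₂ =>
          rw [TensorProduct.tmul_add, map_add, map_add, Finsupp.add_apply]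
          exact Submodule.add_mem _ hy₁ hy₂
    have hw' : M.ρ w = (e (M.ρ w)).sum fun k m => m ⊗ₜ[K] 𝒞 k := (coeff_expand 𝒞 (M.ρ w)).symm
    rw [hw', map_finsuppSum, map_finsuppSum, map_finsuppSum, Finsupp.sum_apply]
    apply Submodule.sum_mem
    intro k _
    exact hmem _ (Submodule.subset_span ⟨k, rfl⟩) _
  -- the subcomodule
  set T : Set M.carrier := ⋃ w ∈ (s : Set M.carrier), Set.range ⇑(e (M.ρ w)) with hT
  have hTfin : T.Finite := by
    apply Set.Finite.biUnion s.finite_toSet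
    intro w _
    apply Set.Finite.subset
      (Set.Finite.insert 0 ((e (M.ρ w)).support.finite_toSet.image ⇑(e (M.ρ w))))
    rintro _ ⟨k, rfl⟩
    by_cases hk : k ∈ (e (M.ρ w)).support
    · exact Set.mem_insert_iff.mpr (Or.inr ⟨k, hk, rfl⟩)
    · simp only [Finsupp.notMem_support_iff] at hk
      rw [hk]; exact Set.mem_insert _ _
  refine ⟨Submodule.span K T, FiniteDimensional.span_of_finite K hTfin, ?_, ?_⟩
  · -- W ≤ U, via the counit axiom
    rw [← hs, Submodule.span_le]
    intro w hw
    have hcu : w = (TensorProduct.rid K M.carrier)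
        (LinearMap.lTensor M.carrier (Coalgebra.counit (R := K) (A := C)) (M.ρ w)) :=
      (LinearMap.congr_fun M.counit_comp' w).symm
    have hw' : M.ρ w = (e (M.ρ w)).sum fun k m => m ⊗ₜ[K] 𝒞 k := (coeff_expand 𝒞 (M.ρ w)).symm
    rw [hcu, hw', map_finsuppSum, map_finsuppSum]
    apply Submodule.sum_mem
    intro k _
    simp only [LinearMap.lTensor_tmul, TensorProduct.rid_tmul]
    exact Submodule.smul_mem _ _
      (Submodule.subset_span (Set.mem_biUnion hw ⟨k, rfl⟩))
  · -- stability under ρ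
    intro u hu
    have : Submodule.span K T ≤ Submodule.comap M.ρ
        (LinearMap.range (LinearMap.rTensor C (Submodule.span K T).subtype)) := by
      rw [Submodule.span_le]
      rintro t ht
      simp only [hT, Set.mem_iUnion, Set.mem_range, exists_prop] at ht
      obtain ⟨w, hw, k, rfl⟩ := ht
      have hNU : Submodule.span K (Set.range ⇑(e (M.ρ w))) ≤ Submodule.span K T :=
        Submodule.span_mono fun x hx => Set.mem_biUnion hw hx
      obtain ⟨x, hx⟩ := key w k
      refine Submodule.mem_comap.mpr ⟨LinearMap.rTensor C (Submodule.inclusion hNU) x, ?_⟩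
      rw [← hx, ← LinearMap.comp_apply, ← LinearMap.rTensor_comp]
      rfl
    exact this hu

section Sub

lemma rTensor_subtype_injective (P : Type u) [AddCommGroup P] [Module K P]
    (U : Submodule K P) (Q : Type u) [AddCommGroup Q] [Module K Q] :
    Function.Injective (LinearMap.rTensor Q U.subtype) :=
  Module.Flat.rTensor_preserves_injective_linearMap U.subtype U.injective_subtype

variable (M : Comod K C) (U : Submodule K M.carrier)
  (hU : ∀ u ∈ U, M.ρ u ∈ LinearMap.range (LinearMap.rTensor C U.subtype))

/-- The coaction on a subcomodule. -/
def subρ : U →ₗ[K] ↥U ⊗[K] C :=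
  (LinearEquiv.ofInjective (LinearMap.rTensor C U.subtype)
      (rTensor_subtype_injective M.carrier U C)).symm.toLinearMap ∘ₗ
    LinearMap.codRestrict (LinearMap.range (LinearMap.rTensor C U.subtype))
      (M.ρ ∘ₗ U.subtype) (fun u => hU u u.2)

lemma subρ_key : LinearMap.rTensor C U.subtype ∘ₗ subρ M U hU = M.ρ ∘ₗ U.subtype := by
  have h : ∀ y : LinearMap.range (LinearMap.rTensor C U.subtype),
      LinearMap.rTensor C U.subtype
        ((LinearEquiv.ofInjective (LinearMap.rTensor C U.subtype)
          (rTensor_subtype_injective M.carrier U C)).symm y) = ↑y := by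
    intro y
    calc LinearMap.rTensor C U.subtype
          ((LinearEquiv.ofInjective _ (rTensor_subtype_injective M.carrier U C)).symm y)
        = ↑((LinearEquiv.ofInjective _ (rTensor_subtype_injective M.carrier U C))
            ((LinearEquiv.ofInjective _ (rTensor_subtype_injective M.carrier U C)).symm y)) :=
          (LinearEquiv.ofInjective_apply _ _).symm
      _ = ↑y := by rw [LinearEquiv.apply_symm_apply]
  ext u
  simp only [LinearMap.comp_apply, subρ, LinearEquiv.coe_toLinearMap, h,
    LinearMap.codRestrict_apply]
  rfl

lemma subρ_key_apply (u : U) :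
    LinearMap.rTensor C U.subtype (subρ M U hU u) = M.ρ ↑u :=
  LinearMap.congr_fun (subρ_key M U hU) u

/-- A stable subspace of a comodule is a comodule. -/
def subComod : Comod K C where
  carrier := ↥U
  ρ := subρ M U hU
  counit_comp' := by
    have hA : ∀ x : ↥U ⊗[K] C,
        (((TensorProduct.rid K ↥U)
          (LinearMap.lTensor ↥U (Coalgebra.counit (R := K) (A := C)) x) : ↥U) : M.carrier) =
        (TensorProduct.rid K M.carrier)
          (LinearMap.lTensor M.carrier (Coalgebra.counit (R := K) (A := C))
            (LinearMap.rTensor C U.subtype x)) := by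
      intro x
      induction x using TensorProduct.induction_on with
      | zero => simp
      | tmul u c => simp
      | add a b ha hb => simp [ha, hb]
    ext u
    simp only [LinearMap.comp_apply, LinearEquiv.coe_toLinearMap, LinearMap.id_apply]
    calc (((TensorProduct.rid K ↥U)
          (LinearMap.lTensor ↥U (Coalgebra.counit (R := K) (A := C)) (subρ M U hU u)) : ↥U) :
            M.carrier)
        = (TensorProduct.rid K M.carrier)
            (LinearMap.lTensor M.carrier (Coalgebra.counit (R := K) (A := C))
              (LinearMap.rTensor C U.subtype (subρ M U hU u))) := hA _
      _ = (TensorProduct.rid K M.carrier)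
            (LinearMap.lTensor M.carrier (Coalgebra.counit (R := K) (A := C)) (M.ρ ↑u)) := by
          rw [subρ_key_apply]
      _ = ↑u := LinearMap.congr_fun M.counit_comp' ↑u
  coassoc' := by
    have hB : ∀ y : (↥U ⊗[K] C) ⊗[K] C,
        LinearMap.rTensor (C ⊗[K] C) U.subtype ((TensorProduct.assoc K ↥U C C) y) =
        (TensorProduct.assoc K M.carrier C C)
          (LinearMap.rTensor C (LinearMap.rTensor C U.subtype) y) := by
      intro y
      induction y using TensorProduct.induction_on with
      | zero => simp
      | tmul x c =>
          induction x using TensorProduct.induction_on with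
          | zero => simp
          | tmul u c₁ => simp
          | add a b ha hb => simp [TensorProduct.add_tmul, ha, hb]
      | add a b ha hb => simp [ha, hb]
    have hswap : LinearMap.rTensor (C ⊗[K] C) U.subtype ∘ₗ
        LinearMap.lTensor ↥U (Coalgebra.comul (R := K) (A := C)) =
        LinearMap.lTensor M.carrier (Coalgebra.comul (R := K) (A := C)) ∘ₗ
          LinearMap.rTensor C U.subtype := by
      apply TensorProduct.ext'
      intro u c
      simp
    ext u
    apply rTensor_subtype_injective M.carrier U (C ⊗[K] C)
    simp only [LinearMap.comp_apply, LinearEquiv.coe_toLinearMap]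
    calc LinearMap.rTensor (C ⊗[K] C) U.subtype
          ((TensorProduct.assoc K ↥U C C)
            (LinearMap.rTensor C (subρ M U hU) (subρ M U hU u)))
        = (TensorProduct.assoc K M.carrier C C)
            (LinearMap.rTensor C (LinearMap.rTensor C U.subtype)
              (LinearMap.rTensor C (subρ M U hU) (subρ M U hU u))) := hB _
      _ = (TensorProduct.assoc K M.carrier C C)
            (LinearMap.rTensor C M.ρ (M.ρ ↑u)) := by
          rw [← LinearMap.comp_apply, ← LinearMap.rTensor_comp, subρ_key,
            LinearMap.rTensor_comp, LinearMap.comp_apply, subρ_key_apply]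
      _ = LinearMap.lTensor M.carrier (Coalgebra.comul (R := K) (A := C)) (M.ρ ↑u) :=
          LinearMap.congr_fun M.coassoc' ↑u
      _ = LinearMap.rTensor (C ⊗[K] C) U.subtype
            (LinearMap.lTensor ↥U (Coalgebra.comul (R := K) (A := C)) (subρ M U hU u)) := by
          have h := LinearMap.congr_fun hswap (subρ M U hU u)
          simp only [LinearMap.comp_apply] at h
          rw [h, subρ_key_apply]

/-- The inclusion of a subcomodule as a comodule morphism. -/
def subIncl : subComod M U hU ⟶ M :=
  ⟨U.subtype, (subρ_key M U hU).symm⟩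

@[simp] lemma subIncl_f : (subIncl M U hU).f = U.subtype := rfl

end Sub

end Aux

/-- if `α : C → D` makes `C` quasi-finite as a right `D`-comodule, so that the
corestriction functor has a left adjoint `α^!`, then `α^!` sends finite dimensional
`D`-comodules to finite dimensional `C`-comodules. -/
theorem shriek_finiteDimensional
    {K : Type u} [Field K] {C D : Type u}
    [AddCommGroup C] [Module K C] [Coalgebra K C]
    [AddCommGroup D] [Module K D] [Coalgebra K D] (α : C →ₗc[K] D)
    (L : Comod K D ⥤ Comod K C) (adj : L ⊣ cores α)
    (V : Comod K D) (hV : FiniteDimensional K V.carrier) :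
    FiniteDimensional K (L.obj V).carrier := by
  classical
  haveI := hV
  set η : V ⟶ (cores α).obj (L.obj V) := adj.unit.app V with hη
  set W : Submodule K (L.obj V).carrier := LinearMap.range η.f with hWdef
  have hW : FiniteDimensional K W := by exact LinearMap.finiteDimensional_range η.f
  obtain ⟨U, hUfd, hWU, hU⟩ := exists_findim_subcomodule (L.obj V) W hW
  set N : Comod K C := subComod (L.obj V) U hU with hNdef
  set ι : N ⟶ L.obj V := subIncl (L.obj V) U hU with hιdef
  -- the corestriction of the unit to the subcomodule
  have hmemU : ∀ v : V.carrier, η.f v ∈ U := fun v => hWU ⟨v, rfl⟩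
  have hsub : U.subtype ∘ₗ LinearMap.codRestrict U η.f hmemU = η.f :=
    LinearMap.subtype_comp_codRestrict _ _ _
  set g : V ⟶ (cores α).obj N :=
    ⟨LinearMap.codRestrict U η.f hmemU, by
      show coresρ α N ∘ₗ LinearMap.codRestrict U η.f hmemU =
        LinearMap.rTensor D (LinearMap.codRestrict U η.f hmemU) ∘ₗ V.ρ
      apply LinearMap.ext
      intro v
      apply rTensor_subtype_injective (L.obj V).carrier U D
      have hswapD : LinearMap.rTensor D U.subtype ∘ₗ
          LinearMap.lTensor ↥U α.toLinearMap =
          LinearMap.lTensor (L.obj V).carrier α.toLinearMap ∘ₗ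
            LinearMap.rTensor C U.subtype := by
        apply TensorProduct.ext'
        intro u c
        simp
      have hcompat := LinearMap.congr_fun η.compat v
      simp only [LinearMap.comp_apply] at hcompat ⊢
      calc LinearMap.rTensor D U.subtype
            (coresρ α N (LinearMap.codRestrict U η.f hmemU v))
          = LinearMap.rTensor D U.subtype
              (LinearMap.lTensor ↥U α.toLinearMap
                (subρ (L.obj V) U hU (LinearMap.codRestrict U η.f hmemU v))) := rfl
        _ = LinearMap.lTensor (L.obj V).carrier α.toLinearMap
              (LinearMap.rTensor C U.subtype
                (subρ (L.obj V) U hU (LinearMap.codRestrict U η.f hmemU v))) := by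
            have h := LinearMap.congr_fun hswapD
              (subρ (L.obj V) U hU (LinearMap.codRestrict U η.f hmemU v))
            simpa only [LinearMap.comp_apply] using h
        _ = LinearMap.lTensor (L.obj V).carrier α.toLinearMap ((L.obj V).ρ (η.f v)) := by
            rw [subρ_key_apply]
            rfl
        _ = coresρ α (L.obj V) (η.f v) := rfl
        _ = LinearMap.rTensor D U.subtype
              (LinearMap.rTensor D (LinearMap.codRestrict U η.f hmemU) (V.ρ v)) := by
            refine hcompat.trans ?_
            conv_lhs => rw [← hsub]
            exact LinearMap.congr_fun
              (LinearMap.rTensor_comp D U.subtype (LinearMap.codRestrict U η.f hmemU)) (V.ρ v)⟩ with hgdef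
  -- the adjunct map gives a retraction
  set φ : L.obj V ⟶ N := (adj.homEquiv V N).symm g with hφdef
  have hret : φ ≫ ι = 𝟙 (L.obj V) := by
    have hgφ : g ≫ (cores α).map ι = adj.unit.app V := by
      apply ComodHom.ext
      show ((cores α).map ι).f ∘ₗ g.f = η.f
      rw [cores_map_f]
      exact hsub
    apply (adj.homEquiv V (L.obj V)).injective
    rw [Adjunction.homEquiv_naturality_right, Equiv.apply_symm_apply, hgφ,
      Adjunction.homEquiv_unit, CategoryTheory.Functor.map_id]
    exact (Category.comp_id _).symm
  have hfeq : ι.f ∘ₗ φ.f = LinearMap.id := by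
    have := congrArg ComodHom.f hret
    rwa [ComodHom.comp_f, ComodHom.id_f] at this
  have hsurj : Function.Surjective U.subtype := fun m =>
    ⟨φ.f m, LinearMap.congr_fun hfeq m⟩
  haveI : FiniteDimensional K ↥U := hUfd
  exact Module.Finite.of_surjective U.subtype hsurj

end Formal
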